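/- arXiv:1703.06157 — 3 statements merged into one kernel-verified Lean document; each statement's English description precedes it below -/
import Mathlib

section
/- For every t ∈ ℝ, the translation map ψ_t(x) = x(·+t) on Δ is Lipschitz continuous with respect to the metric d, with Lipschitz constant 4^{⌈|t/h|⌉}; in particular d(ψ_t(x), ψ_t(y)) ≤ 4^{⌈|t/h|⌉}·d(x,y) for all x,y. -/
/-
Substituting `s ↦ s - t` turns `d(ψ_t x, ψ_t y)` into the integral of the disagreement indicator
of `x` and `y` against the shifted weight `4^{-|⌊(s - t)/h⌋|}`. Shifting by `t` moves `⌊s/h⌋` by at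
most `⌈|t/h|⌉`, so the shifted weight is at most `4^{⌈|t/h|⌉}` times the original one. The weight
is dominated by `4 / (1 + (s/h)²)`, hence integrable, and the disagreement indicator of piecewise
constant functions is measurable, so integral monotonicity applies.
-/

open MeasureTheory
open scoped Classical

/-- Piecewise constant with some offset `τ ∈ [0, h)`: constant on each
`[n h + τ, (n+1) h + τ)`. -/
def PiecewiseConstOffset {V : Type*} (h : ℝ) (x : ℝ → V) : Prop :=
  ∃ τ : ℝ, 0 ≤ τ ∧ τ < h ∧ ∀ (n : ℤ) (s : ℝ),
    s ∈ Set.Ico ((n : ℝ) * h + τ) (((n : ℝ) + 1) * h + τ) → x s = x ((n : ℝ) * h + τ)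

/-- The metric in integral form:
`d(x,y) = (1/h) ∫_{-∞}^{∞} 4^{-|⌊t/h⌋|} χ(x(t) ≠ y(t)) dt`. -/
noncomputable def dInt {V : Type*} (h : ℝ) (x y : ℝ → V) : ℝ :=
  (1 / h) * ∫ t : ℝ, (1 / 4 ^ (⌊t / h⌋.natAbs) : ℝ) * (if x t = y t then (0 : ℝ) else 1)

/-- The translation `ψ_t(x) = x(· + t)`. -/
def psiFlow {V : Type*} (t : ℝ) (x : ℝ → V) : ℝ → V := fun s => x (s + t)

theorem Int.abs_floor_add_sub_floor_le_ceil_abs {R : Type*} [CommRing R] [LinearOrder R]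
    [IsStrictOrderedRing R] [FloorRing R] (u a : R) : |⌊u + a⌋ - ⌊u⌋| ≤ ⌈|a|⌉ := by
  have ha : |a| ≤ ⌈|a|⌉ := Int.le_ceil _
  have hlower : ⌊u⌋ - ⌈|a|⌉ ≤ ⌊u + a⌋ := by
    rw [← Int.floor_sub_intCast]
    exact Int.floor_mono (by linarith [neg_abs_le a])
  have hupper : ⌊u + a⌋ ≤ ⌊u⌋ + ⌈|a|⌉ := by
    rw [← Int.floor_add_intCast]
    exact Int.floor_mono (by linarith [le_abs_self a])
  rw [abs_le]
  constructor <;> linarith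

theorem abs_le_natAbs_floor_add_one (u : ℝ) : |u| ≤ ⌊u⌋.natAbs + 1 := by
  rw [Nat.cast_natAbs, Int.cast_abs, abs_le]
  have h1 : (⌊u⌋ : ℝ) ≤ u := Int.floor_le u
  have h2 : u < ⌊u⌋ + 1 := Int.lt_floor_add_one u
  constructor <;> linarith [le_abs_self (⌊u⌋ : ℝ), neg_abs_le (⌊u⌋ : ℝ)]

noncomputable def floorDecay (u : ℝ) : ℝ := 1 / 4 ^ ⌊u⌋.natAbs

theorem floorDecay_nonneg (u : ℝ) : 0 ≤ floorDecay u := by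
  unfold floorDecay; positivity

theorem floorDecay_eq_zpow (u : ℝ) : floorDecay u = 4 ^ (-|⌊u⌋|) := by
  rw [floorDecay, Int.abs_eq_natAbs, zpow_neg, zpow_natCast, one_div]

theorem floorDecay_le_mul_floorDecay_add (u a : ℝ) :
    floorDecay u ≤ 4 ^ ⌈|a|⌉ * floorDecay (u + a) := by
  rw [floorDecay_eq_zpow, floorDecay_eq_zpow, ← zpow_add₀ four_ne_zero]
  refine zpow_le_zpow_right₀ (by norm_num) ?_
  have := (abs_sub_abs_le_abs_sub ⌊u + a⌋ ⌊u⌋).trans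
    (Int.abs_floor_add_sub_floor_le_ceil_abs u a)
  linarith

theorem one_add_sq_le_four_mul_four_pow (u : ℝ) : 1 + u ^ 2 ≤ 4 * 4 ^ ⌊u⌋.natAbs := by
  set k := ⌊u⌋.natAbs
  have hu : |u| ≤ k + 1 := abs_le_natAbs_floor_add_one u
  have hk : (k + 2 : ℝ) ≤ 2 ^ (k + 1) := by
    have : k + 2 ≤ 2 ^ (k + 1) := Nat.lt_two_pow_self
    exact_mod_cast this
  calc (1 + u ^ 2 : ℝ) = 1 + |u| ^ 2 := by rw [sq_abs]
    _ ≤ (k + 2) ^ 2 := by nlinarith [abs_nonneg u]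
    _ ≤ (2 ^ (k + 1)) ^ 2 := by gcongr
    _ = 4 * 4 ^ k := by rw [← pow_mul, add_mul, pow_add, mul_comm k, pow_mul]; norm_num [mul_comm]

theorem floorDecay_le (u : ℝ) : floorDecay u ≤ 4 * (1 + u ^ 2)⁻¹ := by
  rw [floorDecay, ← div_eq_mul_inv, div_le_div_iff₀ (by positivity) (by positivity), one_mul]
  exact one_add_sq_le_four_mul_four_pow u

theorem measurable_floorDecay : Measurable floorDecay :=
  (measurable_of_countable fun n : ℤ => (1 / 4 ^ n.natAbs : ℝ)).comp Int.measurable_floor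

theorem integrable_floorDecay : Integrable floorDecay :=
  (integrable_inv_one_add_sq.const_mul 4).mono measurable_floorDecay.aestronglyMeasurable
    (ae_of_all _ fun u => by
      rw [Real.norm_of_nonneg (floorDecay_nonneg u), Real.norm_of_nonneg (by positivity)]
      exact floorDecay_le u)

noncomputable def mismatch {V : Type*} (x y : ℝ → V) (s : ℝ) : ℝ := if x s = y s then 0 else 1

theorem mismatch_nonneg {V : Type*} (x y : ℝ → V) (s : ℝ) : 0 ≤ mismatch x y s := by
  unfold mismatch; split <;> norm_num

theorem norm_mismatch_le_one {V : Type*} (x y : ℝ → V) (s : ℝ) : ‖mismatch x y s‖ ≤ 1 := by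
  unfold mismatch; split <;> norm_num

theorem dInt_eq_integral {V : Type*} (h : ℝ) (x y : ℝ → V) :
    dInt h x y = (1 / h) * ∫ s, floorDecay (s / h) * mismatch x y s := rfl

theorem mismatch_psiFlow {V : Type*} (t : ℝ) (x y : ℝ → V) :
    mismatch (psiFlow t x) (psiFlow t y) = fun s => mismatch x y (s + t) := rfl

theorem PiecewiseConstOffset.exists_measurable_factorization {V : Type*} {h : ℝ} {x : ℝ → V}
    (hx : PiecewiseConstOffset h x) :
    ∃ (k : ℝ → ℤ) (f : ℤ → V), Measurable k ∧ x = f ∘ k := by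
  obtain ⟨τ, hτ0, hτh, hconst⟩ := hx
  have hh : 0 < h := hτ0.trans_lt hτh
  refine ⟨fun s => ⌊(s - τ) / h⌋, fun n => x (n * h + τ),
    Int.measurable_floor.comp ((measurable_id.sub_const τ).div_const h), funext fun s => ?_⟩
  refine hconst _ s ⟨?_, ?_⟩
  · have := (le_div_iff₀ hh).mp (Int.floor_le ((s - τ) / h))
    linarith
  · have := (div_lt_iff₀ hh).mp (Int.lt_floor_add_one ((s - τ) / h))
    linarith

theorem measurable_mismatch {V : Type*} {h : ℝ} {x y : ℝ → V} (hx : PiecewiseConstOffset h x)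
    (hy : PiecewiseConstOffset h y) : Measurable (mismatch x y) := by
  obtain ⟨kx, fx, hkx, rfl⟩ := hx.exists_measurable_factorization
  obtain ⟨ky, fy, hky, rfl⟩ := hy.exists_measurable_factorization
  exact (measurable_of_countable fun p : ℤ × ℤ => if fx p.1 = fy p.2 then (0 : ℝ) else 1).comp
    (hkx.prodMk hky)

theorem integral_mul_comp_add_le {w f : ℝ → ℝ} {C t : ℝ} (hw0 : 0 ≤ w) (hf0 : 0 ≤ f)
    (hw : ∀ s, w (s - t) ≤ C * w s) (hint : Integrable fun s => w s * f s) :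
    ∫ s, w s * f (s + t) ≤ C * ∫ s, w s * f s := by
  have hshift : ∫ s, w s * f (s + t) = ∫ s, w (s - t) * f s := by
    simpa only [add_sub_cancel_right] using
      integral_add_right_eq_self (μ := volume) (fun s => w (s - t) * f s) t
  rw [hshift, ← integral_const_mul]
  refine integral_mono_of_nonneg (ae_of_all _ fun s => mul_nonneg (hw0 _) (hf0 s))
    (hint.const_mul C) (ae_of_all _ fun s => ?_)
  simpa only [mul_assoc] using mul_le_mul_of_nonneg_right (hw s) (hf0 s)

theorem psi_lipschitz_general {V : Type*} (h : ℝ) (hh : 0 < h) (t : ℝ)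
    (x y : ℝ → V) (hx : PiecewiseConstOffset h x) (hy : PiecewiseConstOffset h y) :
    dInt h (psiFlow t x) (psiFlow t y) ≤ (4 : ℝ) ^ (⌈|t / h|⌉ : ℤ) * dInt h x y := by
  have hint : Integrable fun s => floorDecay (s / h) * mismatch x y s :=
    (integrable_floorDecay.comp_div hh.ne').mul_bdd
      (measurable_mismatch hx hy).aestronglyMeasurable (ae_of_all _ (norm_mismatch_le_one x y))
  have hdecay (s : ℝ) : floorDecay ((s - t) / h) ≤ 4 ^ ⌈|t / h|⌉ * floorDecay (s / h) := by
    simpa only [← add_div, sub_add_cancel] using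
      floorDecay_le_mul_floorDecay_add ((s - t) / h) (t / h)
  rw [dInt_eq_integral, dInt_eq_integral, mismatch_psiFlow, mul_left_comm]
  gcongr
  exact integral_mul_comp_add_le (fun s => floorDecay_nonneg _) (mismatch_nonneg x y) hdecay hint

/-- For every `t`, the translation `ψ_t` is Lipschitz with constant `4^{⌈|t/h|⌉}`:
`d(ψ_t x, ψ_t y) ≤ 4^{⌈|t/h|⌉} d(x, y)`. -/
theorem psi_lipschitz {V : Type*} [Fintype V] (h : ℝ) (hh : 0 < h) (t : ℝ)
    (x y : ℝ → V) (hx : PiecewiseConstOffset h x) (hy : PiecewiseConstOffset h y) :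
    dInt h (psiFlow t x) (psiFlow t y) ≤ (4 : ℝ) ^ (⌈|t / h|⌉ : ℤ) * dInt h x y :=
  psi_lipschitz_general h hh t x y hx hy
end

section
/- The space Δ of all real-time translates of piecewise constant functions ℝ → V (constant on [nh+τ,(n+1)h+τ) for some fixed offset τ ∈ [0,h)) whose sequences of values form admissible paths in a directed graph G is sequentially compact with respect to the metric d: every sequence in Δ has a subsequence converging to an element of Δ. -/
open MeasureTheory
open scoped Classical

/-- The set of bi-infinite admissible paths in the directed graph with edge relation `E`. -/
def OmegaPaths {V : Type*} (E : V → V → Prop) : Set (ℤ → V) :=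
  {u | ∀ i : ℤ, E (u i) (u (i + 1))}

/-- The space `Δ` of all real-time translates of the piecewise constant extensions of
admissible paths. -/
def DeltaSpace {V : Type*} (E : V → V → Prop) (h : ℝ) : Set (ℝ → V) :=
  {x | ∃ u ∈ OmegaPaths E, ∃ τ : ℝ, x = fun t => u ⌊(t + τ) / h⌋}

/-!
Write each element of `Δ` as `t ↦ p ⌊(t + τ) / h⌋` with `τ ∈ [0, h)`. By Tychonoff, applied to
`(ℤ → V) × [0, h]` with `V` discrete, a subsequence has paths converging coordinatewise (that is,
each coordinate is eventually constant) and offsets converging to some `τ`. The limit path is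
admissible, and off the countable set of jump times `kh - τ` the subsequence is eventually equal
to the limit. The weight `4^{-|⌊t/h⌋|}` is integrable, so dominated convergence gives `d → 0`.
-/

open Filter Topology Set

lemma integrable_exp_neg_mul_abs {b : ℝ} (hb : 0 < b) :
    Integrable fun t : ℝ => Real.exp (-b * |t|) := by
  have hIoi : IntegrableOn (fun t : ℝ => Real.exp (-b * |t|)) (Ioi 0) :=
    (exp_neg_integrableOn_Ioi 0 hb).congr_fun
      (fun t (ht : 0 < t) => by rw [abs_of_pos ht]) measurableSet_Ioi
  rw [← integrableOn_univ, ← Iio_union_Ici (a := (0 : ℝ)), integrableOn_union,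
    integrableOn_Ici_iff_integrableOn_Ioi]
  refine ⟨?_, hIoi⟩
  rw [← (Measure.measurePreserving_neg (volume : Measure ℝ)).integrableOn_comp_preimage
      (Homeomorph.neg ℝ).measurableEmbedding]
  simpa only [Function.comp_def, abs_neg, neg_preimage, neg_Iio, neg_zero] using hIoi

lemma one_div_four_pow_natAbs_floor_le {h : ℝ} (hh : 0 < h) (t : ℝ) :
    (1 / 4 ^ ⌊t / h⌋.natAbs : ℝ) ≤ 4 * Real.exp (-(Real.log 4 / h) * |t|) := by
  have habs : |t / h| ≤ (⌊t / h⌋.natAbs : ℝ) + 1 := by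
    have hsub := abs_sub_abs_le_abs_sub (t / h) ⌊t / h⌋
    rw [Int.self_sub_floor, abs_of_nonneg (Int.fract_nonneg (t / h))] at hsub
    rw [Nat.cast_natAbs, Int.cast_abs]
    linarith [Int.fract_lt_one (t / h)]
  have hexp : Real.exp (-(Real.log 4 / h) * |t|) = (4 : ℝ) ^ (-|t / h|) := by
    rw [Real.rpow_def_of_pos (by norm_num), abs_div, abs_of_pos hh]
    ring_nf
  calc (1 / 4 ^ ⌊t / h⌋.natAbs : ℝ) = (4 : ℝ) ^ (-(⌊t / h⌋.natAbs : ℝ)) := by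
        rw [Real.rpow_neg (by norm_num), Real.rpow_natCast, one_div]
    _ ≤ (4 : ℝ) ^ ((1 : ℝ) + -|t / h|) :=
        Real.rpow_le_rpow_of_exponent_le (by norm_num) (by linarith)
    _ = 4 * Real.exp (-(Real.log 4 / h) * |t|) := by
        rw [Real.rpow_add (by norm_num), Real.rpow_one, hexp]

lemma measurable_one_div_four_pow_natAbs_floor (h : ℝ) :
    Measurable fun t : ℝ => (1 / 4 ^ ⌊t / h⌋.natAbs : ℝ) :=
  (measurable_from_top (f := fun i : ℤ => (1 / 4 ^ i.natAbs : ℝ))).comp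
    (Int.measurable_floor.comp (measurable_id.div_const h))

lemma integrable_one_div_four_pow_natAbs_floor {h : ℝ} (hh : 0 < h) :
    Integrable fun t : ℝ => (1 / 4 ^ ⌊t / h⌋.natAbs : ℝ) := by
  have hb : 0 < Real.log 4 / h := div_pos (Real.log_pos (by norm_num)) hh
  refine ((integrable_exp_neg_mul_abs hb).const_mul 4).mono
    (measurable_one_div_four_pow_natAbs_floor h).aestronglyMeasurable (ae_of_all _ fun t => ?_)
  rw [Real.norm_of_nonneg (by positivity), Real.norm_of_nonneg (by positivity)]
  exact one_div_four_pow_natAbs_floor_le hh t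

lemma tendsto_dInt_zero {V : Type*} {h : ℝ} (hh : 0 < h) {x : ℕ → ℝ → V} {y : ℝ → V}
    (hmeas : ∀ n, MeasurableSet {t | x n t = y t})
    (hconv : ∀ᵐ t, ∀ᶠ n in atTop, x n t = y t) :
    Tendsto (fun n => dInt h (x n) y) atTop (𝓝 0) := by
  have hint : Tendsto (fun n => ∫ t : ℝ, (1 / 4 ^ ⌊t / h⌋.natAbs : ℝ) *
      (if x n t = y t then (0 : ℝ) else 1)) atTop (𝓝 (∫ _ : ℝ, (0 : ℝ))) := by
    refine tendsto_integral_of_dominated_convergence _ (fun n => ?_)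
      (integrable_one_div_four_pow_natAbs_floor hh) (fun n => ae_of_all _ fun t => ?_) ?_
    · exact ((measurable_one_div_four_pow_natAbs_floor h).mul
        (Measurable.ite (hmeas n) measurable_const measurable_const)).aestronglyMeasurable
    · split_ifs <;> simp
    · filter_upwards [hconv] with t ht
      exact tendsto_const_nhds.congr' (by filter_upwards [ht] with n hn; simp [hn])
  simpa [dInt] using hint.const_mul (1 / h)

lemma measurableSet_floor_eq {V : Type*} (p q : ℤ → V) (a b c : ℝ) :
    MeasurableSet {t : ℝ | p ⌊(t + a) / c⌋ = q ⌊(t + b) / c⌋} :=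
  ((Int.measurable_floor.comp ((measurable_id.add_const a).div_const c)).prodMk
    (Int.measurable_floor.comp ((measurable_id.add_const b).div_const c)))
    (to_countable {z : ℤ × ℤ | p z.1 = q z.2}).measurableSet

lemma eventually_floor_eq_of_tendsto {α : Type*} {l : Filter α} {f : α → ℝ} {c : ℝ}
    (hf : Tendsto f l (𝓝 c)) (hc : (⌊c⌋ : ℝ) ≠ c) : ∀ᶠ a in l, ⌊f a⌋ = ⌊c⌋ := by
  have hmem : Ioo (⌊c⌋ : ℝ) (⌊c⌋ + 1) ∈ 𝓝 c :=
    Ioo_mem_nhds ((Int.floor_le c).lt_of_ne hc) (Int.lt_floor_add_one c)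
  filter_upwards [hf.eventually_mem hmem] with a ha
  exact Int.floor_eq_iff.2 ⟨ha.1.le, ha.2⟩

lemma ae_eventually_floor_eq {h : ℝ} (hh : 0 < h) {T : ℕ → ℝ} {τ : ℝ}
    (hT : Tendsto T atTop (𝓝 τ)) :
    ∀ᵐ t : ℝ, ∀ᶠ n in atTop, ⌊(t + T n) / h⌋ = ⌊(t + τ) / h⌋ := by
  have hjumps : ∀ᵐ t : ℝ, t ∉ range fun k : ℤ => k * h - τ :=
    (countable_range _).ae_notMem volume
  filter_upwards [hjumps] with t ht
  refine eventually_floor_eq_of_tendsto ((tendsto_const_nhds.add hT).div_const h) fun hk => ?_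
  refine ht ⟨⌊(t + τ) / h⌋, ?_⟩
  change (⌊(t + τ) / h⌋ : ℝ) * h - τ = t
  rw [hk, div_mul_cancel₀ _ hh.ne', add_sub_cancel_right]

section Paths

variable {V : Type*} {E : V → V → Prop}

lemma shift_mem_omegaPaths {q : ℤ → V} (hq : q ∈ OmegaPaths E) (k : ℤ) :
    (fun i => q (i + k)) ∈ OmegaPaths E := fun i => by
  simpa only [add_right_comm i 1 k] using hq (i + k)

lemma mem_omegaPaths_of_eventually_eq {ι : Type*} {l : Filter ι} [l.NeBot] {P : ι → ℤ → V}
    {p : ℤ → V} (hP : ∀ n, P n ∈ OmegaPaths E) (hPp : ∀ i, ∀ᶠ n in l, P n i = p i) :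
    p ∈ OmegaPaths E := fun i => by
  obtain ⟨n, h₀, h₁⟩ := ((hPp i).and (hPp (i + 1))).exists
  exact h₀ ▸ h₁ ▸ hP n i

lemma exists_omegaPaths_Ico_of_mem_deltaSpace {h : ℝ} (hh : 0 < h) {x : ℝ → V}
    (hx : x ∈ DeltaSpace E h) :
    ∃ p ∈ OmegaPaths E, ∃ τ ∈ Ico 0 h, x = fun t => p ⌊(t + τ) / h⌋ := by
  obtain ⟨q, hq, σ, rfl⟩ := hx
  refine ⟨_, shift_mem_omegaPaths hq (toIcoDiv hh 0 σ), toIcoMod hh 0 σ,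
    toIcoMod_mem_Ico' hh σ, funext fun t => ?_⟩
  have hσ : (t + σ) / h = (t + toIcoMod hh 0 σ) / h + toIcoDiv hh 0 σ := by
    have hdecomp := toIcoMod_add_toIcoDiv_zsmul hh 0 σ
    rw [zsmul_eq_mul] at hdecomp
    field_simp
    linear_combination -hdecomp
  simp only [hσ, Int.floor_add_intCast]

end Paths

lemma exists_subseq_eventually_eq_of_isCompact {ι V X : Type*} [Countable ι] [Finite V]
    [TopologicalSpace X] [FirstCountableTopology X] {K : Set X} (hK : IsCompact K)
    (P : ℕ → ι → V) (T : ℕ → X) (hT : ∀ n, T n ∈ K) :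
    ∃ φ : ℕ → ℕ, StrictMono φ ∧ ∃ p : ι → V, ∃ τ ∈ K,
      (∀ i, ∀ᶠ n in atTop, P (φ n) i = p i) ∧ Tendsto (T ∘ φ) atTop (𝓝 τ) := by
  let : TopologicalSpace V := ⊥
  have : DiscreteTopology V := ⟨rfl⟩
  obtain ⟨⟨p, τ⟩, ⟨-, hτ⟩, φ, hφ, hconv⟩ :=
    (isCompact_univ.prod hK).isSeqCompact (x := fun n => (P n, T n))
      fun n => ⟨mem_univ (P n), hT n⟩
  refine ⟨φ, hφ, p, τ, hτ, fun i => ?_, (continuous_snd.tendsto _).comp hconv⟩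
  have hi := tendsto_pi_nhds.1 ((continuous_fst.tendsto _).comp hconv) i
  rw [nhds_discrete, tendsto_pure] at hi
  exact hi

/-- `Δ` is sequentially compact: every sequence in `Δ` has a subsequence converging
(in the metric `d`) to an element of `Δ`. -/
theorem delta_seq_compact {V : Type*} [Fintype V] (E : V → V → Prop) (h : ℝ) (hh : 0 < h)
    (u : ℕ → (ℝ → V)) (hu : ∀ n, u n ∈ DeltaSpace E h) :
    ∃ φ : ℕ → ℕ, StrictMono φ ∧ ∃ x ∈ DeltaSpace E h,
      Filter.Tendsto (fun n => dInt h (u (φ n)) x) Filter.atTop (nhds 0) := by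
  choose P hP T hT hPT using fun n => exists_omegaPaths_Ico_of_mem_deltaSpace hh (hu n)
  obtain ⟨φ, hφ, p, τ, -, hPp, hTτ⟩ :=
    exists_subseq_eventually_eq_of_isCompact isCompact_Icc P T fun n => Ico_subset_Icc_self (hT n)
  refine ⟨φ, hφ, fun t => p ⌊(t + τ) / h⌋,
    ⟨p, mem_omegaPaths_of_eventually_eq (fun n => hP (φ n)) hPp, τ, rfl⟩, ?_⟩
  refine tendsto_dInt_zero hh (fun n => ?_) ?_
  · rw [hPT]
    exact measurableSet_floor_eq _ _ _ _ _
  · filter_upwards [ae_eventually_floor_eq hh hTτ] with t ht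
    filter_upwards [ht, hPp ⌊(t + τ) / h⌋] with n hfloor hpath
    rw [hPT]
    exact (congrArg (P (φ n)) hfloor).trans hpath
end

section
/- Each lift Δ_C is isolated: any g ∈ Δ \ Δ_C has some translate ψ(t₀,g) at distance greater than 1/4 from every element of Δ_C; consequently, any g whose full ψ-orbit stays within distance 1/4 of Δ_C must belong to Δ_C. -/
open scoped Classical
open MeasureTheory Set Real

/-- `C` is a strongly connected component. -/
def IsSCC {V : Type*} (E : V → V → Prop) (C : Set V) : Prop :=
  C.Nonempty ∧ (∀ a ∈ C, ∀ b ∈ C, Relation.ReflTransGen E a b) ∧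
    ∀ D : Set V, C ⊆ D → (∀ a ∈ D, ∀ b ∈ D, Relation.ReflTransGen E a b) → D = C

/-- The lift of `C` to `Δ`. -/
def DeltaLift {V : Type*} (E : V → V → Prop) (h : ℝ) (C : Set V) : Set (ℝ → V) :=
  {f ∈ DeltaSpace E h | ∀ t : ℝ, f t ∈ C}

lemma integrable_exp_neg_abs' (b : ℝ) (hb : 0 < b) :
    Integrable fun t : ℝ => Real.exp (-(b * |t|)) := by
  have base : IntegrableOn (fun t : ℝ => Real.exp (-(b * |t|))) (Ioi 0) := by
    refine ((exp_neg_integrableOn_Ioi 0 hb).congr_fun ?_ measurableSet_Ioi)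
    intro t ht
    simp [abs_of_pos (mem_Ioi.mp ht), neg_mul]
  rw [← integrableOn_univ, ← @Iio_union_Ici _ _ (0 : ℝ), integrableOn_union,
    integrableOn_Ici_iff_integrableOn_Ioi]
  refine ⟨?_, base⟩
  rw [← (Measure.measurePreserving_neg (volume : Measure ℝ)).integrableOn_comp_preimage
      (Homeomorph.neg ℝ).measurableEmbedding]
  simpa [Function.comp_def] using base

lemma one_le_dInt {V : Type*} (h : ℝ) (hh : 0 < h) (x y : ℝ → V) (u v : ℤ → V) (a b : ℝ)
    (hx : x = fun t => u ⌊(t + a) / h⌋) (hy : y = fun t => v ⌊(t + b) / h⌋)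
    (hne : ∀ t ∈ Ico (0 : ℝ) h, x t ≠ y t) : 1 ≤ dInt h x y := by
  set F : ℝ → ℝ := fun t => (1 / 4 ^ (⌊t / h⌋.natAbs) : ℝ) * (if x t = y t then (0 : ℝ) else 1)
    with hF
  have hF0 : ∀ t, 0 ≤ F t := by
    intro t
    refine mul_nonneg (by positivity) ?_
    split <;> norm_num
  have mF : Measurable F := by
    have hFe : F = (fun p : ℤ × ℤ × ℤ =>
        (1 / 4 ^ p.1.natAbs : ℝ) * (if u p.2.1 = v p.2.2 then (0 : ℝ) else 1)) ∘
        (fun t => (⌊t / h⌋, ⌊(t + a) / h⌋, ⌊(t + b) / h⌋)) := by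
      funext t
      simp [hF, hx, hy, Function.comp]
    rw [hFe]
    exact (measurable_of_countable _).comp
      (((measurable_id.div_const h).floor).prodMk
        ((((measurable_id.add_const a).div_const h).floor).prodMk
          (((measurable_id.add_const b).div_const h).floor)))
  have hb : 0 < Real.log 4 / h := div_pos (Real.log_pos (by norm_num)) hh
  have hbound : ∀ t, ‖F t‖ ≤ 4 * Real.exp (-(Real.log 4 / h * |t|)) := by
    intro t
    rw [Real.norm_of_nonneg (hF0 t)]
    have h1 : F t ≤ (1 / 4 ^ (⌊t / h⌋.natAbs) : ℝ) := by
      have : (if x t = y t then (0 : ℝ) else 1) ≤ 1 := by split <;> norm_num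
      calc F t ≤ (1 / 4 ^ (⌊t / h⌋.natAbs) : ℝ) * 1 :=
            mul_le_mul_of_nonneg_left this (by positivity)
        _ = _ := mul_one _
    refine h1.trans ?_
    have hk : |t| / h - 1 ≤ ((⌊t / h⌋.natAbs : ℕ) : ℝ) := by
      have habs : |t| / h = |t / h| := by
        rw [abs_div, abs_of_pos hh]
      rw [habs]
      rcases le_or_gt 0 (t / h) with hs | hs
      · have h2 : (0 : ℤ) ≤ ⌊t / h⌋ := Int.floor_nonneg.mpr hs
        have : ((⌊t / h⌋.natAbs : ℕ) : ℝ) = (⌊t / h⌋ : ℝ) := by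
          rw [Nat.cast_natAbs, abs_of_nonneg (by exact_mod_cast h2)]
        rw [this, abs_of_nonneg hs]
        linarith [Int.sub_one_lt_floor (t / h)]
      · have h2 : ⌊t / h⌋ ≤ 0 := Int.floor_nonpos hs.le
        have : ((⌊t / h⌋.natAbs : ℕ) : ℝ) = -(⌊t / h⌋ : ℝ) := by
          rw [Nat.cast_natAbs, abs_of_nonpos (by exact_mod_cast h2)]
          push_cast
          ring
        rw [this, abs_of_neg hs]
        have := Int.floor_le (t / h)
        have : (⌊t / h⌋ : ℝ) ≤ t / h := Int.floor_le _
        linarith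
    have heq : (1 / 4 ^ (⌊t / h⌋.natAbs) : ℝ) =
        Real.exp (-((⌊t / h⌋.natAbs : ℝ) * Real.log 4)) := by
      rw [Real.exp_neg, Real.exp_nat_mul, Real.exp_log (by norm_num : (0:ℝ) < 4), one_div]
    rw [heq]
    have h4 : (4 : ℝ) * Real.exp (-(Real.log 4 / h * |t|)) =
        Real.exp (Real.log 4 - Real.log 4 / h * |t|) := by
      rw [sub_eq_add_neg, Real.exp_add, Real.exp_log (by norm_num : (0:ℝ) < 4)]
    rw [h4]
    apply Real.exp_le_exp.mpr
    have hlog : 0 < Real.log 4 := Real.log_pos (by norm_num)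
    have : Real.log 4 / h * |t| = (|t| / h) * Real.log 4 := by ring
    rw [this]
    nlinarith [hk, hlog]
  have hInt : Integrable F := by
    refine Integrable.mono' ((integrable_exp_neg_abs' (Real.log 4 / h) hb).const_mul 4)
      mF.aestronglyMeasurable (ae_of_all _ hbound)
  have h1 : ∫ t in Ico (0 : ℝ) h, F t = h := by
    rw [setIntegral_congr_fun measurableSet_Ico (g := fun _ => (1 : ℝ)) ?_]
    · simp [Real.volume_Ico, ENNReal.toReal_ofReal hh.le, hh.le]
    · intro t ht
      have hfl : ⌊t / h⌋ = 0 :=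
        Int.floor_eq_zero_iff.mpr ⟨div_nonneg ht.1 hh.le, (div_lt_one hh).mpr ht.2⟩
      simp [hF, hfl, hne t ht]
  have h2 : ∫ t in Ico (0 : ℝ) h, F t ≤ ∫ t, F t :=
    setIntegral_le_integral hInt (ae_of_all _ hF0)
  have h3 : h ≤ ∫ t, F t := h1 ▸ h2
  have : dInt h x y = (1 / h) * ∫ t, F t := rfl
  rw [this]
  calc (1:ℝ) = (1/h) * h := by field_simp
    _ ≤ (1/h) * ∫ t, F t := mul_le_mul_of_nonneg_left h3 (by positivity)

/-- `Δ_C` is isolated: any `g ∈ Δ \ Δ_C` has some translate at distance greater than `1/4`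
from every element of `Δ_C`; consequently any `g ∈ Δ` whose whole `ψ`-orbit stays within
distance `1/4` of `Δ_C` belongs to `Δ_C`. -/
theorem lift_isolated {V : Type*} [Fintype V] (E : V → V → Prop) (h : ℝ) (hh : 0 < h)
    (C : Set V) (hC : IsSCC E C) :
    (∀ g ∈ DeltaSpace E h, g ∉ DeltaLift E h C →
      ∃ t₀ : ℝ, ∀ f ∈ DeltaLift E h C, 1 / 4 < dInt h (psiFlow t₀ g) f) ∧
    (∀ g ∈ DeltaSpace E h,
      (∀ t : ℝ, ∃ f ∈ DeltaLift E h C, dInt h (psiFlow t g) f ≤ 1 / 4) →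
      g ∈ DeltaLift E h C) := by
  have part1 : ∀ g ∈ DeltaSpace E h, g ∉ DeltaLift E h C →
      ∃ t₀ : ℝ, ∀ f ∈ DeltaLift E h C, 1 / 4 < dInt h (psiFlow t₀ g) f := by
    intro g hg hgC
    obtain ⟨u, hu, τ, rfl⟩ := hg
    have hex : ∃ t₁ : ℝ, u ⌊(t₁ + τ) / h⌋ ∉ C := by
      by_contra hcon
      push_neg at hcon
      exact hgC ⟨⟨u, hu, τ, rfl⟩, hcon⟩
    obtain ⟨t₁, ht₁⟩ := hex
    set i : ℤ := ⌊(t₁ + τ) / h⌋ with hi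
    refine ⟨(i : ℝ) * h - τ, ?_⟩
    intro f hf
    obtain ⟨⟨v, hv, σ, rfl⟩, hfC⟩ := hf
    have hxeq : psiFlow ((i : ℝ) * h - τ) (fun t => u ⌊(t + τ) / h⌋) =
        fun t => u ⌊(t + ((i : ℝ) * h - τ + τ)) / h⌋ := by
      funext s
      simp only [psiFlow]
      ring_nf
    have hne : ∀ s ∈ Set.Ico (0 : ℝ) h,
        psiFlow ((i : ℝ) * h - τ) (fun t => u ⌊(t + τ) / h⌋) s ≠ (fun t => v ⌊(t + σ) / h⌋) s := by
      intro s hs heq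
      have hval : (s + ((i : ℝ) * h - τ) + τ) / h = s / h + (i : ℝ) := by
        field_simp
        ring
      have hfl : ⌊(s + ((i : ℝ) * h - τ) + τ) / h⌋ = ⌊s / h⌋ + i := by
        rw [hval, Int.floor_add_intCast]
      have hfl0 : ⌊s / h⌋ = 0 :=
        Int.floor_eq_zero_iff.mpr ⟨div_nonneg hs.1 hh.le, (div_lt_one hh).mpr hs.2⟩
      have : psiFlow ((i : ℝ) * h - τ) (fun t => u ⌊(t + τ) / h⌋) s = u i := by
        simp only [psiFlow]
        rw [hfl, hfl0, zero_add]
      rw [this] at heq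
      exact ht₁ (heq ▸ hfC s)
    have := one_le_dInt h hh _ _ u v ((i : ℝ) * h - τ + τ) σ hxeq rfl hne
    linarith
  refine ⟨part1, ?_⟩
  intro g hg horb
  by_contra hgC
  obtain ⟨t₀, ht₀⟩ := part1 g hg hgC
  obtain ⟨f, hf, hle⟩ := horb t₀
  exact absurd hle (not_le.mpr (ht₀ f hf))
end
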